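/- arXiv:2006.03639 — 2 statements merged into one kernel-verified Lean document; each statement's English description precedes it below -/
import Mathlib

section
/- Let σ ∈ ℝ with σ² = 1 and let u : ℝ³ → ℝ be infinitely differentiable in (t, x, y), satisfying the KP equation ∂_x∂_t u + ∂_x( u ∂_x u + ∂_x³ u ) + σ ∂_y² u = 0 everywhere on ℝ³. Suppose there exists R > 0 such that u(t,x,y) = 0 whenever x² + y² ≥ R². Then for every t ∈ ℝ: ∫_{ℝ²} u(t,x,y) dx dy = 0. -/
/-- Partial derivative with respect to `t` of a function of `(t,x,y)`. -/
noncomputable def Dt (u : ℝ → ℝ → ℝ → ℝ) : ℝ → ℝ → ℝ → ℝ :=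
  fun t x y => deriv (fun s => u s x y) t

/-- Partial derivative with respect to `x`. -/
noncomputable def Dx (u : ℝ → ℝ → ℝ → ℝ) : ℝ → ℝ → ℝ → ℝ :=
  fun t x y => deriv (fun s => u t s y) x

/-- Partial derivative with respect to `y`. -/
noncomputable def Dy (u : ℝ → ℝ → ℝ → ℝ) : ℝ → ℝ → ℝ → ℝ :=
  fun t x y => deriv (fun s => u t x s) y

/-- Joint infinite differentiability of a function of `(t,x,y)`. -/
def Smooth3 (u : ℝ → ℝ → ℝ → ℝ) : Prop :=
  ContDiff ℝ (⊤ : ℕ∞) fun p : ℝ × ℝ × ℝ => u p.1 p.2.1 p.2.2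

open MeasureTheory

/-! Since `σ ^ 2 = 1`, the KP equation says `∂_y² u = ∂_x g` with
`g = -σ (u_t + u u_x + u_xxx)` supported in the same compact set as `u`.
Integrating twice by parts in `y` gives `∫ u dy = ∫ (y ^ 2 / 2) ∂_y² u dy`, so after swapping the
order of integration the mass of `u` is `∫ (y ^ 2 / 2) (∫ ∂_x g dx) dy`, and the integral of the
derivative of a compactly supported function vanishes. -/

open Set

theorem HasCompactSupport.integral_deriv_eq_zero {f : ℝ → ℝ} (hf : ContDiff ℝ 1 f)
    (h : HasCompactSupport f) : ∫ x, deriv f x = 0 :=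
  integral_eq_zero_of_hasDerivAt_of_integrable
    (fun x => (hf.differentiable one_ne_zero x).hasDerivAt)
    ((hf.continuous_deriv le_rfl).integrable_of_hasCompactSupport h.deriv)
    (hf.continuous.integrable_of_hasCompactSupport h)

theorem HasCompactSupport.integral_eq_integral_sq_div_two_mul_deriv_deriv {f : ℝ → ℝ}
    (hf : ContDiff ℝ 2 f) (h : HasCompactSupport f) :
    ∫ x, f x = ∫ x, x ^ 2 / 2 * deriv (deriv f) x := by
  have hf' : ContDiff ℝ 1 (deriv f) := hf.deriv'
  have hf'' : Continuous (deriv (deriv f)) := hf'.continuous_deriv le_rfl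
  set φ : ℝ → ℝ := fun x => x ^ 2 / 2 * deriv f x - x * f x
  have hφ : ContDiff ℝ 1 φ := by
    have : ContDiff ℝ 1 f := hf.of_le (by norm_num)
    fun_prop
  have hφc : HasCompactSupport φ :=
    (h.deriv.mul_left (f := fun x : ℝ => x ^ 2 / 2)).sub (h.mul_left (f := id))
  have hderiv : ∀ x, deriv φ x = x ^ 2 / 2 * deriv (deriv f) x - f x := by
    intro x
    refine ((((hasDerivAt_pow 2 x).div_const 2).fun_mul
      (hf'.differentiable one_ne_zero x).hasDerivAt).fun_sub
      ((hasDerivAt_id' x).fun_mul ((hf.differentiable two_ne_zero x).hasDerivAt))).deriv.trans ?_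
    norm_num
    ring
  have hint₁ : Integrable fun x => x ^ 2 / 2 * deriv (deriv f) x :=
    ((by fun_prop : Continuous fun x : ℝ => x ^ 2 / 2).mul hf'').integrable_of_hasCompactSupport
      h.deriv.deriv.mul_left
  have hint₂ : Integrable f := hf.continuous.integrable_of_hasCompactSupport h
  have hzero : ∫ x, (x ^ 2 / 2 * deriv (deriv f) x - f x) = 0 := by
    simpa only [hderiv] using hφc.integral_deriv_eq_zero hφ
  rwa [integral_sub hint₁ hint₂, sub_eq_zero, eq_comm] at hzero

namespace Smooth3

variable {u : ℝ → ℝ → ℝ → ℝ}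

theorem of_eq_fderiv_apply (hu : Smooth3 u) (v : ℝ × ℝ × ℝ) {w : ℝ → ℝ → ℝ → ℝ}
    (hw : ∀ p : ℝ × ℝ × ℝ,
      w p.1 p.2.1 p.2.2 = fderiv ℝ (fun p : ℝ × ℝ × ℝ => u p.1 p.2.1 p.2.2) p v) :
    Smooth3 w := by
  unfold Smooth3
  rw [funext hw]
  exact (ContinuousLinearMap.apply ℝ ℝ v).contDiff.comp (hu.fderiv_right (by simp))

theorem dt (hu : Smooth3 u) : Smooth3 (Dt u) :=
  hu.of_eq_fderiv_apply (1, 0, 0) fun ⟨t, x, y⟩ =>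
    ((hu.differentiable (by simp) _).hasFDerivAt.comp_hasDerivAt t
      (((hasDerivAt_id t).prodMk ((hasDerivAt_const t x).prodMk (hasDerivAt_const t y)) :
        HasDerivAt (fun s : ℝ => (s, x, y)) _ t))).deriv

theorem dx (hu : Smooth3 u) : Smooth3 (Dx u) :=
  hu.of_eq_fderiv_apply (0, 1, 0) fun ⟨t, x, y⟩ =>
    ((hu.differentiable (by simp) _).hasFDerivAt.comp_hasDerivAt x
      (((hasDerivAt_const x t).prodMk ((hasDerivAt_id x).prodMk (hasDerivAt_const x y)) :
        HasDerivAt (fun s : ℝ => (t, s, y)) _ x))).deriv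

theorem dy (hu : Smooth3 u) : Smooth3 (Dy u) :=
  hu.of_eq_fderiv_apply (0, 0, 1) fun ⟨t, x, y⟩ =>
    ((hu.differentiable (by simp) _).hasFDerivAt.comp_hasDerivAt y
      (((hasDerivAt_const y t).prodMk ((hasDerivAt_const y x).prodMk (hasDerivAt_id y)) :
        HasDerivAt (fun s : ℝ => (t, x, s)) _ y))).deriv

theorem contDiff_x (hu : Smooth3 u) (t y : ℝ) : ContDiff ℝ (⊤ : ℕ∞) fun x => u t x y :=
  hu.comp (contDiff_const.prodMk (contDiff_id.prodMk contDiff_const))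

theorem contDiff_y (hu : Smooth3 u) (t x : ℝ) : ContDiff ℝ (⊤ : ℕ∞) fun y => u t x y :=
  hu.comp (contDiff_const.prodMk (contDiff_const.prodMk contDiff_id))

theorem continuous_xy (hu : Smooth3 u) (t : ℝ) : Continuous fun p : ℝ × ℝ => u t p.1 p.2 :=
  hu.continuous.comp (continuous_const.prodMk continuous_id)

end Smooth3

def VanishesOutside (K : Set (ℝ × ℝ)) (u : ℝ → ℝ → ℝ → ℝ) : Prop :=
  ∀ t x y, (x, y) ∉ K → u t x y = 0

namespace VanishesOutside

variable {K : Set (ℝ × ℝ)} {u : ℝ → ℝ → ℝ → ℝ}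

theorem dt (h : VanishesOutside K u) : VanishesOutside K (Dt u) := by
  intro t x y hxy
  simp [Dt, h _ x y hxy]

theorem dx (hK : IsClosed K) (h : VanishesOutside K u) : VanishesOutside K (Dx u) := by
  intro t x y hxy
  have hopen : IsOpen {s : ℝ | (s, y) ∉ K} := hK.isOpen_compl.preimage (by fun_prop)
  have hzero : (fun s => u t s y) =ᶠ[nhds x] fun _ => 0 :=
    Filter.eventually_of_mem (hopen.mem_nhds hxy) fun s hs => h t s y hs
  simp [Dx, hzero.deriv_eq]

theorem dy (hK : IsClosed K) (h : VanishesOutside K u) : VanishesOutside K (Dy u) := by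
  intro t x y hxy
  have hopen : IsOpen {s : ℝ | (x, s) ∉ K} := hK.isOpen_compl.preimage (by fun_prop)
  have hzero : (fun s => u t x s) =ᶠ[nhds y] fun _ => 0 :=
    Filter.eventually_of_mem (hopen.mem_nhds hxy) fun s hs => h t x s hs
  simp [Dy, hzero.deriv_eq]

theorem hasCompactSupport_xy (hK : IsCompact K) (h : VanishesOutside K u) (t : ℝ) :
    HasCompactSupport fun p : ℝ × ℝ => u t p.1 p.2 :=
  HasCompactSupport.intro hK fun p hp => h t p.1 p.2 hp

theorem hasCompactSupport_x (hK : IsCompact K) (h : VanishesOutside K u) (t y : ℝ) :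
    HasCompactSupport fun x => u t x y :=
  HasCompactSupport.intro (hK.image continuous_fst) fun x hx =>
    h t x y fun hxy => hx ⟨_, hxy, rfl⟩

theorem hasCompactSupport_y (hK : IsCompact K) (h : VanishesOutside K u) (t x : ℝ) :
    HasCompactSupport fun y => u t x y :=
  HasCompactSupport.intro (hK.image continuous_snd) fun y hy =>
    h t x y fun hxy => hy ⟨_, hxy, rfl⟩

end VanishesOutside

theorem vanishesOutside_Icc_prod_Icc {R : ℝ} (hR : 0 < R) {u : ℝ → ℝ → ℝ → ℝ}
    (h : ∀ t x y, x ^ 2 + y ^ 2 ≥ R ^ 2 → u t x y = 0) :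
    VanishesOutside (Icc (-R) R ×ˢ Icc (-R) R) u := by
  intro t x y hxy
  refine h t x y ?_
  simp only [mem_prod, mem_Icc, not_and_or, not_le] at hxy
  rcases hxy with (hx | hx) | (hy | hy) <;> nlinarith

theorem integral_eq_zero_of_Dy_Dy_eq_Dx {K : Set (ℝ × ℝ)} (hK : IsCompact K)
    {u g : ℝ → ℝ → ℝ → ℝ} (hu : Smooth3 u) (hg : Smooth3 g)
    (huK : VanishesOutside K u) (hgK : VanishesOutside K g) (t : ℝ)
    (h : ∀ x y, Dy (Dy u) t x y = Dx g t x y) :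
    ∫ p : ℝ × ℝ, u t p.1 p.2 = 0 := by
  have hu_int : Integrable fun p : ℝ × ℝ => u t p.1 p.2 :=
    (hu.continuous_xy t).integrable_of_hasCompactSupport (huK.hasCompactSupport_xy hK t)
  have hw_int : Integrable fun p : ℝ × ℝ => p.2 ^ 2 / 2 * Dy (Dy u) t p.1 p.2 :=
    ((by fun_prop : Continuous fun p : ℝ × ℝ => p.2 ^ 2 / 2).mul
      (hu.dy.dy.continuous_xy t)).integrable_of_hasCompactSupport
      ((huK.dy hK.isClosed).dy hK.isClosed |>.hasCompactSupport_xy hK t).mul_left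
  have hmass_x : ∀ x, ∫ y, u t x y = ∫ y, y ^ 2 / 2 * Dy (Dy u) t x y := fun x =>
    (huK.hasCompactSupport_y hK t x).integral_eq_integral_sq_div_two_mul_deriv_deriv
      ((hu.contDiff_y t x).of_le (by norm_cast))
  have hflux_x : ∀ y, ∫ x, Dx g t x y = 0 := fun y =>
    (hgK.hasCompactSupport_x hK t y).integral_deriv_eq_zero
      ((hg.contDiff_x t y).of_le (by norm_cast))
  rw [Measure.volume_eq_prod] at hu_int hw_int ⊢
  calc ∫ p : ℝ × ℝ, u t p.1 p.2 ∂(volume.prod volume)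
      = ∫ x, ∫ y, y ^ 2 / 2 * Dy (Dy u) t x y := by
        simp only [integral_prod _ hu_int, hmass_x]
    _ = ∫ y, ∫ x, y ^ 2 / 2 * Dy (Dy u) t x y := integral_integral_swap hw_int
    _ = 0 := by simp [integral_const_mul, h, hflux_x]

/-- Mass integral constraint for the KP equation: any smooth solution of
`u_{tx} + (u u_x + u_{xxx})_x + σ u_{yy} = 0` with uniformly compact support
in `(x,y)` has vanishing total mass `∫_{ℝ²} u dx dy = 0` at every time. -/
theorem kp_mass_constraint (σ : ℝ) (hσ : σ ^ 2 = 1)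
    (u : ℝ → ℝ → ℝ → ℝ) (hu : Smooth3 u)
    (heq : ∀ t x y, Dx (Dt u) t x y
      + Dx (fun t x y => u t x y * Dx u t x y + Dx (Dx (Dx u)) t x y) t x y
      + σ * Dy (Dy u) t x y = 0)
    (hsupp : ∃ R > 0, ∀ t x y : ℝ, x ^ 2 + y ^ 2 ≥ R ^ 2 → u t x y = 0) :
    ∀ t : ℝ, ∫ p : ℝ × ℝ, u t p.1 p.2 = 0 := by
  obtain ⟨R, hR, hvanish⟩ := hsupp
  have hK : IsCompact (Icc (-R) R ×ˢ Icc (-R) R) := isCompact_Icc.prod isCompact_Icc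
  have huK := vanishesOutside_Icc_prod_Icc hR hvanish
  set N : ℝ → ℝ → ℝ → ℝ := fun t x y => u t x y * Dx u t x y + Dx (Dx (Dx u)) t x y
  have hN : Smooth3 N := (hu.mul hu.dx).add hu.dx.dx.dx
  set F : ℝ → ℝ → ℝ → ℝ := fun t x y => -σ * (Dt u t x y + N t x y)
  have hF : Smooth3 F := contDiff_const.mul (hu.dt.add hN)
  have hFK : VanishesOutside (Icc (-R) R ×ˢ Icc (-R) R) F := fun t x y hxy => by
    have hKc := hK.isClosed
    simp [F, N, huK t x y hxy, huK.dt t x y hxy, ((huK.dx hKc).dx hKc).dx hKc t x y hxy]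
  intro t
  refine integral_eq_zero_of_Dy_Dy_eq_Dx hK hu hF huK hFK t fun x y => ?_
  have hDxF : Dx F t x y = -σ * (Dx (Dt u) t x y + Dx N t x y) := by
    simp only [Dx, F]
    rw [deriv_const_mul_field, deriv_fun_add ((hu.dt.contDiff_x t y).differentiable (by simp) x)
      ((hN.contDiff_x t y).differentiable (by simp) x)]
  rw [hDxF]
  linear_combination σ * heq t x y - Dy (Dy u) t x y * hσ
end

section
/- Let σ ∈ ℝ with σ² = 1 and let u : ℝ³ → ℝ be infinitely differentiable in (t, x, y), satisfying the KP equation ∂_x∂_t u + ∂_x( u ∂_x u + ∂_x³ u ) + σ ∂_y² u = 0 everywhere on ℝ³. Suppose there exists R > 0 such that u(t,x,y) = 0 whenever x² + y² ≥ R². Then for every t ∈ ℝ: ∫_{ℝ²} y · u(t,x,y) dx dy = 0. -/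
open MeasureTheory

/-!
The KP equation says `σ u_yy = -∂ₓ(u_t + u u_x + u_xxx)`, so the integral of `u_yy` along every
horizontal line vanishes. Two integrations by parts in `y` turn `∫ y u dy` into
`∫ (y³/6) u_yy dy`; exchanging the order of integration then gives
`∫∫ y u = ∫ (y³/6) (∫ u_yy dx) dy = 0`.
-/

theorem integral_deriv_eq_zero_of_hasCompactSupport {E : Type*} [NormedAddCommGroup E]
    [NormedSpace ℝ E] {g : ℝ → E} (hg : ContDiff ℝ 1 g) (hs : HasCompactSupport g) :
    ∫ x, deriv g x = 0 :=
  integral_eq_zero_of_hasDerivAt_of_integrable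
    (fun x => (hg.differentiable one_ne_zero x).hasDerivAt)
    ((hg.continuous_deriv le_rfl).integrable_of_hasCompactSupport hs.deriv)
    (hg.continuous.integrable_of_hasCompactSupport hs)

theorem integral_mul_eq_integral_cube_div_six_mul_deriv_deriv {g : ℝ → ℝ}
    (hg : ContDiff ℝ 2 g) (hs : HasCompactSupport g) :
    ∫ y, y * g y = ∫ y, y ^ 3 / 6 * deriv (deriv g) y := by
  have hg' : ContDiff ℝ 1 (deriv g) := (contDiff_succ_iff_deriv (n := 1).1 hg).2.2
  have hderiv : ∀ y, HasDerivAt (fun y => y ^ 3 / 6 * deriv g y - y ^ 2 / 2 * g y)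
      (y ^ 3 / 6 * deriv (deriv g) y - y * g y) y := by
    intro y
    have h1 := ((hasDerivAt_pow 3 y).div_const 6).mul (hg'.differentiable one_ne_zero y).hasDerivAt
    have h2 := ((hasDerivAt_pow 2 y).div_const 2).mul
      (hg.differentiable (by norm_num) y).hasDerivAt
    exact (h1.sub h2).congr_deriv (by norm_num; ring)
  have hg'' : Continuous (deriv (deriv g)) := hg'.continuous_deriv le_rfl
  have hzero := integral_eq_zero_of_hasDerivAt_of_integrable hderiv
    ((by fun_prop : Continuous fun y => y ^ 3 / 6 * deriv (deriv g) y - y * g y)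
      |>.integrable_of_hasCompactSupport (hs.deriv.deriv.mul_left.sub hs.mul_left))
    ((by fun_prop : Continuous fun y => y ^ 3 / 6 * deriv g y - y ^ 2 / 2 * g y)
      |>.integrable_of_hasCompactSupport (hs.deriv.mul_left.sub hs.mul_left))
  rw [integral_sub ((by fun_prop : Continuous fun y => y ^ 3 / 6 * deriv (deriv g) y)
      |>.integrable_of_hasCompactSupport hs.deriv.deriv.mul_left)
    ((by fun_prop : Continuous fun y => y * g y)
      |>.integrable_of_hasCompactSupport hs.mul_left)] at hzero
  exact (sub_eq_zero.1 hzero).symm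

def uncurry3 (u : ℝ → ℝ → ℝ → ℝ) : ℝ × ℝ × ℝ → ℝ := fun p => u p.1 p.2.1 p.2.2

section Smooth3

variable {u : ℝ → ℝ → ℝ → ℝ}

theorem Smooth3.hasDerivAt_comp (hu : Smooth3 u) {γ : ℝ → ℝ × ℝ × ℝ} {v : ℝ × ℝ × ℝ} {s : ℝ}
    (hγ : HasDerivAt γ v s) : HasDerivAt (uncurry3 u ∘ γ) (fderiv ℝ (uncurry3 u) (γ s) v) s :=
  ((hu.differentiable (by simp)).differentiableAt.hasFDerivAt).comp_hasDerivAt s hγ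

theorem Smooth3.fderiv_apply (hu : Smooth3 u) (v : ℝ × ℝ × ℝ) :
    Smooth3 fun t x y => fderiv ℝ (uncurry3 u) (t, x, y) v :=
  (ContinuousLinearMap.apply ℝ ℝ v).contDiff.comp (hu.fderiv_right (by simp))

theorem Smooth3.Dt_eq (hu : Smooth3 u) :
    Dt u = fun t x y => fderiv ℝ (uncurry3 u) (t, x, y) (1, 0, 0) := by
  funext t x y
  exact (hu.hasDerivAt_comp ((hasDerivAt_id t).prodMk
    ((hasDerivAt_const t x).prodMk (hasDerivAt_const t y)))).deriv

theorem Smooth3.Dx_eq (hu : Smooth3 u) :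
    Dx u = fun t x y => fderiv ℝ (uncurry3 u) (t, x, y) (0, 1, 0) := by
  funext t x y
  exact (hu.hasDerivAt_comp ((hasDerivAt_const x t).prodMk
    ((hasDerivAt_id x).prodMk (hasDerivAt_const x y)))).deriv

theorem Smooth3.Dy_eq (hu : Smooth3 u) :
    Dy u = fun t x y => fderiv ℝ (uncurry3 u) (t, x, y) (0, 0, 1) := by
  funext t x y
  exact (hu.hasDerivAt_comp ((hasDerivAt_const y t).prodMk
    ((hasDerivAt_const y x).prodMk (hasDerivAt_id y)))).deriv

theorem Smooth3.Dt (hu : Smooth3 u) : Smooth3 (Dt u) := hu.Dt_eq ▸ hu.fderiv_apply _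

theorem Smooth3.Dx (hu : Smooth3 u) : Smooth3 (Dx u) := hu.Dx_eq ▸ hu.fderiv_apply _

theorem Smooth3.Dy (hu : Smooth3 u) : Smooth3 (Dy u) := hu.Dy_eq ▸ hu.fderiv_apply _

theorem Smooth3.contDiff_x_s12 (hu : Smooth3 u) (n : ℕ) (t y : ℝ) : ContDiff ℝ n fun x => u t x y :=
  (hu.comp (by fun_prop : ContDiff ℝ (⊤ : ℕ∞) fun x : ℝ => (t, x, y))).of_le (mod_cast le_top)

theorem Smooth3.contDiff_y_s12 (hu : Smooth3 u) (n : ℕ) (t x : ℝ) : ContDiff ℝ n fun y => u t x y :=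
  (hu.comp (by fun_prop : ContDiff ℝ (⊤ : ℕ∞) fun y : ℝ => (t, x, y))).of_le (mod_cast le_top)

theorem Smooth3.continuous_xy_s12 (hu : Smooth3 u) (t : ℝ) :
    Continuous fun p : ℝ × ℝ => u t p.1 p.2 :=
  hu.continuous.comp (by fun_prop : Continuous fun p : ℝ × ℝ => (t, p.1, p.2))

end Smooth3

def SupportedIn (K : Set (ℝ × ℝ)) (u : ℝ → ℝ → ℝ → ℝ) : Prop :=
  ∀ t x y, (x, y) ∉ K → u t x y = 0

section SupportedIn

variable {K : Set (ℝ × ℝ)} {u : ℝ → ℝ → ℝ → ℝ}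

theorem SupportedIn.add {v : ℝ → ℝ → ℝ → ℝ} (hu : SupportedIn K u) (hv : SupportedIn K v) :
    SupportedIn K fun t x y => u t x y + v t x y := fun t x y hxy => by
  simp only [hu t x y hxy, hv t x y hxy, add_zero]

theorem SupportedIn.mul_right (hu : SupportedIn K u) (v : ℝ → ℝ → ℝ → ℝ) :
    SupportedIn K fun t x y => u t x y * v t x y := fun t x y hxy => by
  simp only [hu t x y hxy, zero_mul]

theorem SupportedIn.Dt (hu : SupportedIn K u) : SupportedIn K (Dt u) := fun t x y hxy => by
  have h : (fun s => u s x y) = fun _ => 0 := funext fun s => hu s x y hxy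
  show deriv (fun s => u s x y) t = 0
  rw [h, deriv_const']

theorem SupportedIn.Dx (hK : IsClosed K) (hu : SupportedIn K u) : SupportedIn K (Dx u) :=
  fun t x y hxy => by
    have h : (fun s => u t s y) =ᶠ[nhds x] fun _ => 0 :=
      Filter.eventually_of_mem ((hK.isOpen_compl.preimage
        (continuous_id.prodMk continuous_const)).mem_nhds hxy) fun s hs => hu t s y hs
    show deriv (fun s => u t s y) x = 0
    rw [h.deriv_eq, deriv_const']

theorem SupportedIn.Dy (hK : IsClosed K) (hu : SupportedIn K u) : SupportedIn K (Dy u) :=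
  fun t x y hxy => by
    have h : (fun s => u t x s) =ᶠ[nhds y] fun _ => 0 :=
      Filter.eventually_of_mem ((hK.isOpen_compl.preimage
        (continuous_const.prodMk continuous_id)).mem_nhds hxy) fun s hs => hu t x s hs
    show deriv (fun s => u t x s) y = 0
    rw [h.deriv_eq, deriv_const']

theorem SupportedIn.hasCompactSupport_x (hK : IsCompact K) (hu : SupportedIn K u) (t y : ℝ) :
    HasCompactSupport fun x => u t x y :=
  HasCompactSupport.intro (hK.image continuous_fst) fun x hx => hu t x y fun hxy => hx ⟨_, hxy, rfl⟩

theorem SupportedIn.hasCompactSupport_y (hK : IsCompact K) (hu : SupportedIn K u) (t x : ℝ) :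
    HasCompactSupport fun y => u t x y :=
  HasCompactSupport.intro (hK.image continuous_snd) fun y hy => hu t x y fun hxy => hy ⟨_, hxy, rfl⟩

theorem SupportedIn.hasCompactSupport_xy (hK : IsCompact K) (hu : SupportedIn K u) (t : ℝ) :
    HasCompactSupport fun p : ℝ × ℝ => u t p.1 p.2 :=
  HasCompactSupport.intro hK fun p hp => hu t p.1 p.2 hp

end SupportedIn

section Integrals

variable {K : Set (ℝ × ℝ)} {u : ℝ → ℝ → ℝ → ℝ}

theorem Smooth3.integrable_x (hu : Smooth3 u) (hK : IsCompact K) (huK : SupportedIn K u)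
    (t y : ℝ) : Integrable fun x => u t x y :=
  (hu.contDiff_x_s12 0 t y).continuous.integrable_of_hasCompactSupport (huK.hasCompactSupport_x hK t y)

theorem Smooth3.integrable_mul_xy (hu : Smooth3 u) (hK : IsCompact K) (huK : SupportedIn K u)
    {φ : ℝ × ℝ → ℝ} (hφ : Continuous φ) (t : ℝ) : Integrable fun p : ℝ × ℝ => φ p * u t p.1 p.2 :=
  (hφ.mul (hu.continuous_xy_s12 t)).integrable_of_hasCompactSupport
    (huK.hasCompactSupport_xy hK t).mul_left

theorem integral_Dx_eq_zero (hu : Smooth3 u) (hK : IsCompact K) (huK : SupportedIn K u)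
    (t y : ℝ) : ∫ x, Dx u t x y = 0 :=
  integral_deriv_eq_zero_of_hasCompactSupport (hu.contDiff_x_s12 1 t y) (huK.hasCompactSupport_x hK t y)

end Integrals

def IsKPSolution (σ : ℝ) (u : ℝ → ℝ → ℝ → ℝ) : Prop :=
  ∀ t x y, Dx (Dt u) t x y
    + Dx (fun t x y => u t x y * Dx u t x y + Dx (Dx (Dx u)) t x y) t x y
    + σ * Dy (Dy u) t x y = 0

theorem IsKPSolution.integral_Dy_Dy_eq_zero {σ : ℝ} {K : Set (ℝ × ℝ)} {u : ℝ → ℝ → ℝ → ℝ}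
    (hkp : IsKPSolution σ u) (hσ : σ ≠ 0) (hu : Smooth3 u) (hK : IsCompact K)
    (huK : SupportedIn K u) (t y : ℝ) : ∫ x, Dy (Dy u) t x y = 0 := by
  set H := fun t x y => u t x y * Dx u t x y + Dx (Dx (Dx u)) t x y
  have hH : Smooth3 H := ContDiff.add (ContDiff.mul hu hu.Dx) hu.Dx.Dx.Dx
  have hHK : SupportedIn K H :=
    (huK.mul_right _).add (((huK.Dx hK.isClosed).Dx hK.isClosed).Dx hK.isClosed)
  have hflux : σ * ∫ x, Dy (Dy u) t x y = -∫ x, (Dx (Dt u) t x y + Dx H t x y) := by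
    rw [← integral_const_mul, ← integral_neg]
    congr with x
    linarith [hkp t x y]
  rw [integral_add (hu.Dt.Dx.integrable_x hK (huK.Dt.Dx hK.isClosed) t y)
    (hH.Dx.integrable_x hK (hHK.Dx hK.isClosed) t y), integral_Dx_eq_zero hu.Dt hK huK.Dt,
    integral_Dx_eq_zero hH hK hHK, add_zero, neg_zero] at hflux
  exact (mul_eq_zero.1 hflux).resolve_left hσ

/-- `y`-moment integral constraint for the KP equation: any smooth solution of
`u_{tx} + (u u_x + u_{xxx})_x + σ u_{yy} = 0` with uniformly compact support
in `(x,y)` satisfies `∫_{ℝ²} y u dx dy = 0` at every time. -/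
theorem kp_ymoment_constraint (σ : ℝ) (hσ : σ ^ 2 = 1)
    (u : ℝ → ℝ → ℝ → ℝ) (hu : Smooth3 u)
    (heq : ∀ t x y, Dx (Dt u) t x y
      + Dx (fun t x y => u t x y * Dx u t x y + Dx (Dx (Dx u)) t x y) t x y
      + σ * Dy (Dy u) t x y = 0)
    (hsupp : ∃ R > 0, ∀ t x y : ℝ, x ^ 2 + y ^ 2 ≥ R ^ 2 → u t x y = 0) :
    ∀ t : ℝ, ∫ p : ℝ × ℝ, p.2 * u t p.1 p.2 = 0 := by
  obtain ⟨R, hR, hsupp⟩ := hsupp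
  set K := Set.Icc (-R) R ×ˢ Set.Icc (-R) R
  have hK : IsCompact K := isCompact_Icc.prod isCompact_Icc
  have huK : SupportedIn K u := fun t x y hxy => hsupp t x y <| by
    simp only [K, Set.mem_prod, Set.mem_Icc, not_and_or, not_le] at hxy
    rcases hxy with (h | h) | (h | h) <;> nlinarith
  have hσ0 : σ ≠ 0 := by rintro rfl; norm_num at hσ
  intro t
  have hmoment : ∀ x, ∫ y, y * u t x y = ∫ y, y ^ 3 / 6 * Dy (Dy u) t x y := fun x =>
    integral_mul_eq_integral_cube_div_six_mul_deriv_deriv (hu.contDiff_y_s12 2 t x)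
      (huK.hasCompactSupport_y hK t x)
  rw [Measure.volume_eq_prod, integral_prod _ (hu.integrable_mul_xy hK huK continuous_snd t)]
  calc ∫ x, ∫ y, y * u t x y = ∫ x, ∫ y, y ^ 3 / 6 * Dy (Dy u) t x y := by simp only [hmoment]
    _ = ∫ y, ∫ x, y ^ 3 / 6 * Dy (Dy u) t x y :=
      integral_integral_swap (hu.Dy.Dy.integrable_mul_xy hK ((huK.Dy hK.isClosed).Dy hK.isClosed)
        (by fun_prop : Continuous fun p : ℝ × ℝ => p.2 ^ 3 / 6) t)
    _ = 0 := by
      simp only [integral_const_mul, IsKPSolution.integral_Dy_Dy_eq_zero heq hσ0 hu hK huK,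
        mul_zero, integral_zero]
end
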